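/- Let R be a commutative ring and let 𝖰 : Fun(Γ₊,R) → R-mod be a left adjoint of 𝖳. Then for every R-module M, the left derived functors of 𝖰 satisfy L₀𝖰(𝖳(M)) ≅ M and Lᵢ𝖰(𝖳(M)) = 0 for all i > 0. -/

import Mathlib

open CategoryTheory Limits

/-- `Γ₊`: the category of finite pointed sets. -/
abbrev GammaPlus : Type 1 := CategoryTheory.ObjectProperty.FullSubcategory (fun X : Pointed => Finite X.X)

/-- `[n]₊ ∈ Γ₊`: the pointed set with `n` non-basepoint elements and basepoint `o = none`. -/
def GammaPlus.of (n : ℕ) : GammaPlus := ⟨⟨Option (Fin n), none⟩, inferInstance⟩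

/-- The set of non-basepoint elements of a finite pointed set. -/
def GammaPlus.nb (S : GammaPlus) : Type := {s : S.obj.X // s ≠ S.obj.point}

variable (R : Type) [CommRing R]

open Classical in
/-- The linear map underlying the action of `𝖳(M)` on a pointed map `f : S ⟶ S'`:
the summand indexed by `s` is sent (identically) to the summand indexed by `f(s)`,
and to zero if `f(s) = o`. -/
noncomputable def spanTMapAux (M : ModuleCat R) {S S' : GammaPlus} (f : S ⟶ S') :
    (GammaPlus.nb S →₀ M) →ₗ[R] (GammaPlus.nb S' →₀ M) :=
  Finsupp.lsum R fun s =>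
    if h : f.hom.toFun s.1 ≠ S'.obj.point then Finsupp.lsingle (⟨f.hom.toFun s.1, h⟩ : GammaPlus.nb S')
    else 0

open Classical in
lemma spanTMapAux_single (M : ModuleCat R) {S S' : GammaPlus} (f : S ⟶ S') (s : GammaPlus.nb S)
    (m : M) :
    spanTMapAux R M f (Finsupp.single s m) =
      if h : f.hom.toFun s.1 ≠ S'.obj.point then Finsupp.single (⟨f.hom.toFun s.1, h⟩ : GammaPlus.nb S') m
      else 0 := by
  unfold spanTMapAux
  rw [Finsupp.lsum_single]
  split_ifs with h <;> rfl

lemma spanTMapAux_id (M : ModuleCat R) (S : GammaPlus) :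
    spanTMapAux R M (𝟙 S) = LinearMap.id := by
  apply Finsupp.lhom_ext
  intro s m
  rw [spanTMapAux_single, LinearMap.id_apply]
  split_ifs with h
  · rfl
  · exact absurd s.2 h

lemma spanTMapAux_comp (M : ModuleCat R) {S S' S'' : GammaPlus} (f : S ⟶ S') (g : S' ⟶ S'') :
    spanTMapAux R M (f ≫ g) = (spanTMapAux R M g).comp (spanTMapAux R M f) := by
  apply Finsupp.lhom_ext
  intro s m
  rw [LinearMap.comp_apply, spanTMapAux_single, spanTMapAux_single]
  by_cases h1 : f.hom.toFun s.1 ≠ S'.obj.point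
  · rw [dif_pos h1]
    erw [spanTMapAux_single]
    split_ifs with hA hB hB
    · rfl
    · exact absurd hA hB
    · exact absurd hB hA
    · rfl
  · rw [dif_neg h1]
    erw [map_zero]
    have hg : g.hom.toFun (f.hom.toFun s.1) = S''.obj.point := by
      rw [not_not.mp h1]; exact g.hom.map_point
    split_ifs with hA
    · exact absurd hg hA
    · rfl

lemma spanTMapAux_natural {M N : ModuleCat R} (φ : M ⟶ N) {S S' : GammaPlus} (f : S ⟶ S') :
    (Finsupp.mapRange.linearMap (α := GammaPlus.nb S') φ.hom).comp (spanTMapAux R M f)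
      = (spanTMapAux R N f).comp (Finsupp.mapRange.linearMap φ.hom) := by
  apply Finsupp.lhom_ext
  intro s m
  rw [LinearMap.comp_apply, LinearMap.comp_apply, spanTMapAux_single]
  erw [Finsupp.mapRange.linearMap_apply, Finsupp.mapRange.linearMap_apply,
    Finsupp.mapRange_single, spanTMapAux_single]
  by_cases h : f.hom.toFun s.1 ≠ S'.obj.point
  · rw [dif_pos h, dif_pos h]
    erw [Finsupp.mapRange_single]; rfl
  · rw [dif_neg h, dif_neg h]
    erw [Finsupp.mapRange_zero]; rfl

/-- The functor `𝖳 : R-mod ⥤ Fun(Γ₊, R)`, with `𝖳(M)(S) = ⊕_{s ∈ S∖{o}} M`;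
a pointed map `f` sends the summand indexed by `s` identically to the summand indexed
by `f(s)`, and to zero if `f(s) = o`. -/
noncomputable def spanT : ModuleCat R ⥤ (GammaPlus ⥤ ModuleCat R) where
  obj M :=
    { obj := fun S => ModuleCat.of R (GammaPlus.nb S →₀ M)
      map := fun f => ModuleCat.ofHom (spanTMapAux R M f)
      map_id := fun S => ModuleCat.hom_ext (spanTMapAux_id R M S)
      map_comp := fun f g => ModuleCat.hom_ext (spanTMapAux_comp R M f g) }
  map {M N} φ :=
    { app := fun S => ModuleCat.ofHom (Finsupp.mapRange.linearMap φ.hom)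
      naturality := fun {S S'} f => ModuleCat.hom_ext (spanTMapAux_natural R φ f) }
  map_id M := by
    ext S : 2
    exact ModuleCat.hom_ext Finsupp.mapRange.linearMap_id
  map_comp φ ψ := by
    ext S : 2
    exact ModuleCat.hom_ext (Finsupp.mapRange.linearMap_comp _ _)

/-- The reduced span functor `T ∈ Fun(Γ₊, R)`, `T(S) = ⊕_{s ∈ S∖{o}} R`. -/
noncomputable def reducedSpan : GammaPlus ⥤ ModuleCat R := (spanT R).obj (ModuleCat.of R R)

/-- A left adjoint between abelian categories is additive. -/
lemma Q_additive (R : Type) [CommRing R]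
    (Q : (GammaPlus ⥤ ModuleCat R) ⥤ ModuleCat R) (adj : Q ⊣ spanT R) : Q.Additive := by
  letI := adj.leftAdjoint_preservesColimits
  letI : PreservesColimitsOfShape (Discrete WalkingPair) Q := by infer_instance
  letI := Limits.preservesBinaryBiproducts_of_preservesBinaryCoproducts Q
  exact Functor.additive_of_preservesBinaryBiproducts Q

/-!
The functor `𝖳` is exact, fully faithful, and preserves projectives: a map `𝖳(P) ⟶ E` amounts
to a map `v : P ⟶ E([1]₊)` killed by `E` of the zero endomorphism of `[1]₊`, and since that
endomorphism is idempotent any lift of a map into `E([1]₊)` can be corrected to satisfy this.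
Hence `𝖳` carries a projective resolution `P` of `M` to one of `𝖳(M)`, and `𝖰(𝖳(P)) ≅ P` through
the counit, which is invertible because `𝖳` is fully faithful. So `Lᵢ𝖰(𝖳(M))` is the homology
of a resolution of `M`.
-/

theorem Finsupp.exact_mapRange_linearMap {A M N P : Type*} [Ring A] [AddCommGroup M]
    [AddCommGroup N] [AddCommGroup P] [Module A M] [Module A N] [Module A P]
    {f : M →ₗ[A] N} {g : N →ₗ[A] P} (h : Function.Exact f g) (ι : Type*) :
    Function.Exact (mapRange.linearMap (α := ι) f) (mapRange.linearMap g) := by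
  rw [LinearMap.exact_iff] at h ⊢
  refine le_antisymm ?_ ?_
  · rw [ker_mapRange, h, submodule_eq_iSup, iSup_le_iff]
    rintro i _ ⟨_, ⟨m, rfl⟩, rfl⟩
    exact ⟨single i m, by simp⟩
  · rintro _ ⟨x, rfl⟩
    ext i
    simpa using LinearMap.congr_fun (LinearMap.range_le_ker_iff.mp h.ge) (x i)

theorem CategoryTheory.ShortComplex.exact_of_forall_exact_map_evaluation {J C : Type*}
    [Category J] [Category C] [Abelian C] (S : ShortComplex (J ⥤ C))
    (h : ∀ j, (S.map ((evaluation J C).obj j)).Exact) : S.Exact := by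
  simp only [exact_iff_isZero_homology] at h ⊢
  exact Functor.isZero _ fun j => (h j).of_iso (S.mapHomologyIso ((evaluation J C).obj j)).symm

namespace CategoryTheory.Adjunction

universe v₁ v₂ u₁ u₂

variable {C : Type u₁} [Category.{v₁} C] [Abelian C] [HasProjectiveResolutions C]
  {D : Type u₂} [Category.{v₂} D] [Abelian D] [HasProjectiveResolutions D]
  {F : D ⥤ C} {G : C ⥤ D} [F.Additive] [G.Additive] [G.Full] [G.Faithful]
  [G.PreservesHomology] [G.PreservesProjectiveObjects]

noncomputable def leftDerivedObjIsoHomologySingle (adj : F ⊣ G) (M : C) (n : ℕ) :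
    (F.leftDerived n).obj (G.obj M) ≅ ((ChainComplex.single₀ C).obj M).homology n :=
  let P := projectiveResolution M
  let counitIso : (F.mapHomologicalComplex _).obj ((G.mapHomologicalComplex _).obj P.complex) ≅
      P.complex :=
    HomologicalComplex.Hom.isoOfComponents (fun i => (asIso adj.counit).app (P.complex.X i))
      fun i j _ => (adj.counit.naturality (P.complex.d i j)).symm
  (G.mapProjectiveResolution P).isoLeftDerivedObj F n ≪≫
    (HomologicalComplex.homologyFunctor C _ n).mapIso counitIso ≪≫ isoOfQuasiIsoAt P.π n

end CategoryTheory.Adjunction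

instance : (spanT R).Additive where
  map_add := by
    intros
    ext S x : 4
    exact Finsupp.ext fun s => rfl

instance : (spanT R).PreservesHomology := by
  refine Functor.preservesHomology_of_map_exact _ fun S hS => ?_
  refine S.map (spanT R) |>.exact_of_forall_exact_map_evaluation fun j => ?_
  rw [ShortComplex.moduleCat_exact_iff_range_eq_ker, eq_comm, ← LinearMap.exact_iff]
  exact Finsupp.exact_mapRange_linearMap
    (LinearMap.exact_iff.mpr (hS.moduleCat_range_eq_ker).symm) _

namespace GammaPlus

def star : nb (of 1) := ⟨some 0, Option.some_ne_none 0⟩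

instance : Unique (nb (of 1)) where
  default := star
  uniq := fun ⟨s, hs⟩ => by
    obtain ⟨i, rfl⟩ := Option.ne_none_iff_exists'.mp hs
    exact Subtype.ext (congrArg some (Subsingleton.elim i 0))

def pick {S : GammaPlus} (s : nb S) : of 1 ⟶ S := ⟨fun x => x.elim S.obj.point fun _ => s.1, rfl⟩

def zeroHom (S S' : GammaPlus) : S ⟶ S' := ⟨fun _ => S'.obj.point, rfl⟩

lemma hom_ext {S S' : GammaPlus} {f g : S ⟶ S'} (h : ∀ x, f.hom.toFun x = g.hom.toFun x) :
    f = g :=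
  InducedCategory.hom_ext (Pointed.Hom.ext (funext h))

lemma pick_star : pick star = 𝟙 (of 1) :=
  hom_ext fun
    | none => rfl
    | some i => by rw [Subsingleton.elim i 0]; rfl

lemma pick_comp_of_ne {S S' : GammaPlus} (s : nb S) (f : S ⟶ S')
    (hs : f.hom.toFun s.1 ≠ S'.obj.point) : pick s ≫ f = pick ⟨f.hom.toFun s.1, hs⟩ :=
  hom_ext fun
    | none => f.hom.map_point
    | some _ => rfl

lemma pick_comp_of_eq {S S' : GammaPlus} (s : nb S) (f : S ⟶ S')
    (hs : f.hom.toFun s.1 = S'.obj.point) : pick s ≫ f = zeroHom _ _ :=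
  hom_ext fun
    | none => f.hom.map_point
    | some _ => hs

lemma zeroHom_comp {S S' S'' : GammaPlus} (f : S' ⟶ S'') :
    zeroHom S S' ≫ f = zeroHom S S'' :=
  hom_ext fun _ => f.hom.map_point

end GammaPlus

open GammaPlus

section spanT

variable {R}

noncomputable def spanTι (M : ModuleCat R) {S : GammaPlus} (s : nb S) :
    M ⟶ ((spanT R).obj M).obj S :=
  ModuleCat.ofHom (Finsupp.lsingle s)

lemma spanT_obj_hom_ext {M Y : ModuleCat R} {S : GammaPlus} {φ ψ : ((spanT R).obj M).obj S ⟶ Y}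
    (h : ∀ s : nb S, spanTι M s ≫ φ = spanTι M s ≫ ψ) : φ = ψ :=
  ModuleCat.hom_ext (Finsupp.lhom_ext' fun s => congrArg ModuleCat.Hom.hom (h s))

lemma spanTι_comp_map_of_ne (M : ModuleCat R) {S S' : GammaPlus} (f : S ⟶ S') (s : nb S)
    (hs : f.hom.toFun s.1 ≠ S'.obj.point) :
    spanTι M s ≫ ((spanT R).obj M).map f = spanTι M ⟨f.hom.toFun s.1, hs⟩ := by
  ext m
  exact (spanTMapAux_single R M f s m).trans (dif_pos hs)

lemma spanTι_comp_map_of_eq (M : ModuleCat R) {S S' : GammaPlus} (f : S ⟶ S') (s : nb S)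
    (hs : f.hom.toFun s.1 = S'.obj.point) : spanTι M s ≫ ((spanT R).obj M).map f = 0 := by
  ext m
  exact (spanTMapAux_single R M f s m).trans (dif_neg (not_not.mpr hs))

lemma spanTι_comp_map_pick (M : ModuleCat R) {S : GammaPlus} (s : nb S) :
    spanTι M star ≫ ((spanT R).obj M).map (pick s) = spanTι M s :=
  spanTι_comp_map_of_ne M (pick s) star s.2

lemma spanT_obj_map_zeroHom (M : ModuleCat R) (S S' : GammaPlus) :
    ((spanT R).obj M).map (zeroHom S S') = 0 :=
  spanT_obj_hom_ext fun s => by rw [spanTι_comp_map_of_eq M _ s rfl, comp_zero]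

lemma spanTι_comp_map_app {M N : ModuleCat R} (φ : M ⟶ N) {S : GammaPlus} (s : nb S) :
    spanTι M s ≫ ((spanT R).map φ).app S = φ ≫ spanTι N s := by
  ext m
  exact Finsupp.mapRange_single (hf := map_zero _)

instance (M : ModuleCat R) : IsIso (spanTι M star) := by
  let π : ((spanT R).obj M).obj (of 1) ⟶ M := ModuleCat.ofHom (Finsupp.lapply star)
  have hι : spanTι M star ≫ π = 𝟙 M := by
    ext m
    exact Finsupp.single_eq_same
  refine ⟨π, hι, spanT_obj_hom_ext fun s => ?_⟩
  rw [Subsingleton.elim s star, reassoc_of% hι, Category.comp_id]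

lemma spanT_hom_ext {M : ModuleCat R} {X : GammaPlus ⥤ ModuleCat R} {α β : (spanT R).obj M ⟶ X}
    (h : spanTι M star ≫ α.app (of 1) = spanTι M star ≫ β.app (of 1)) : α = β := by
  ext S : 2
  refine spanT_obj_hom_ext fun s => ?_
  rw [← spanTι_comp_map_pick, Category.assoc, Category.assoc, α.naturality, β.naturality,
    reassoc_of% h]

instance : (spanT R).Faithful where
  map_injective {M N φ ψ} h := by
    rw [← cancel_mono (spanTι N star), ← spanTι_comp_map_app, ← spanTι_comp_map_app, h]

instance : (spanT R).Full where
  map_surjective {M N} η :=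
    ⟨spanTι M star ≫ η.app (of 1) ≫ inv (spanTι N star),
      spanT_hom_ext (by rw [spanTι_comp_map_app, Category.assoc, Category.assoc,
        IsIso.inv_hom_id, Category.comp_id])⟩

end spanT

section spanTLift

variable {R} {P : ModuleCat R} {E : GammaPlus ⥤ ModuleCat R} (v : P ⟶ E.obj (of 1))

noncomputable def spanTLiftApp (S : GammaPlus) : ((spanT R).obj P).obj S ⟶ E.obj S :=
  ModuleCat.ofHom (Finsupp.lsum R fun s => (v ≫ E.map (pick s)).hom)

lemma spanTι_comp_spanTLiftApp {S : GammaPlus} (s : nb S) :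
    spanTι P s ≫ spanTLiftApp v S = v ≫ E.map (pick s) := by
  ext m
  exact Finsupp.lsum_single R _ s m

variable {v} in
lemma comp_map_zeroHom_eq_zero (hv : v ≫ E.map (zeroHom (of 1) (of 1)) = 0) (S : GammaPlus) :
    v ≫ E.map (zeroHom (of 1) S) = 0 := by
  rw [← zeroHom_comp (zeroHom (of 1) S), E.map_comp, reassoc_of% hv, zero_comp]

noncomputable def spanTLift (hv : v ≫ E.map (zeroHom (of 1) (of 1)) = 0) :
    (spanT R).obj P ⟶ E where
  app := spanTLiftApp v
  naturality S S' f := spanT_obj_hom_ext fun s => by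
    rw [reassoc_of% spanTι_comp_spanTLiftApp, ← E.map_comp]
    by_cases hs : f.hom.toFun s.1 = S'.obj.point
    · rw [reassoc_of% spanTι_comp_map_of_eq P f s hs, zero_comp, pick_comp_of_eq s f hs,
        comp_map_zeroHom_eq_zero hv]
    · rw [reassoc_of% spanTι_comp_map_of_ne P f s hs, pick_comp_of_ne s f hs]
      exact spanTι_comp_spanTLiftApp v _

variable {v} in
lemma spanTι_comp_spanTLift_app (hv : v ≫ E.map (zeroHom (of 1) (of 1)) = 0) {S : GammaPlus}
    (s : nb S) : spanTι P s ≫ (spanTLift v hv).app S = v ≫ E.map (pick s) :=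
  spanTι_comp_spanTLiftApp v s

end spanTLift

instance : (spanT R).PreservesProjectiveObjects where
  projective_obj {P} _ := ⟨fun {E X} f e _ => by
    let u := Projective.factorThru (spanTι P star ≫ f.app _) (e.app _)
    -- `E.map (zeroHom _ _)` is idempotent, so this correction of `u` is killed by it
    let v := u - u ≫ E.map (zeroHom (of 1) (of 1))
    have hv : v ≫ E.map (zeroHom (of 1) (of 1)) = 0 := by
      simp [v, ← E.map_comp, zeroHom_comp]
    have hve : v ≫ e.app _ = spanTι P star ≫ f.app _ := by
      simp [v, u, ← f.naturality, spanT_obj_map_zeroHom]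
    refine ⟨spanTLift v hv, spanT_hom_ext ?_⟩
    rw [NatTrans.comp_app, reassoc_of% spanTι_comp_spanTLift_app, pick_star, E.map_id,
      Category.id_comp, hve]⟩

/-- For a left adjoint `𝖰` of `𝖳`, the left derived functors satisfy `L₀𝖰(𝖳(M)) ≅ M` and
`Lᵢ𝖰(𝖳(M)) = 0` for `i > 0`.  (`Fun(Γ₊, R)` has enough projectives, so the left derived
functors of the right exact functor `𝖰` are defined.) -/
theorem leftDerived_Q_spanT (R : Type) [CommRing R]
    [EnoughProjectives (GammaPlus ⥤ ModuleCat R)]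
    (Q : (GammaPlus ⥤ ModuleCat R) ⥤ ModuleCat R) (adj : Q ⊣ spanT R)
    (M : ModuleCat R) :
    letI : Q.Additive := Q_additive R Q adj
    Nonempty ((Q.leftDerived 0).obj ((spanT R).obj M) ≅ M) ∧
    ∀ i : ℕ, 0 < i → IsZero ((Q.leftDerived i).obj ((spanT R).obj M)) := by
  have : Q.Additive := Q_additive R Q adj
  refine ⟨⟨adj.leftDerivedObjIsoHomologySingle M 0 ≪≫
    HomologicalComplex.singleObjHomologySelfIso _ 0 M⟩, fun i hi => ?_⟩
  obtain ⟨n, rfl⟩ := Nat.exists_eq_add_one_of_ne_zero hi.ne'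
  refine IsZero.of_iso ?_ (adj.leftDerivedObjIsoHomologySingle M (n + 1))
  rw [← HomologicalComplex.exactAt_iff_isZero_homology]
  exact ChainComplex.exactAt_succ_single_obj M n
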